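/- Let A be a unital commutative C*-algebra, E a Hilbert A-module, and (fᵢ)_{i∈ℕ} a standard normalized tight frame for E, i.e. for every x ∈ E the series Σᵢ ⟨x,fᵢ⟩⟨fᵢ,x⟩ converges in norm to ⟨x,x⟩. Let T : E → E be adjointable with adjoint T*, and suppose the series Σᵢ ⟨T*fᵢ,T*fᵢ⟩ converges in norm to some b ∈ A. Then for every n ∈ ℕ and all x₁,…,xₙ ∈ E with μₙ(x₁,…,xₙ) ≤ 1 one has Σⱼ₌₁ⁿ ⟨Txⱼ,Txⱼ⟩ ≤ b in the canonical order on self-adjoint elements of A; in particular π̃₂(T) ≤ ‖b‖^{1/2}. -/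

import Mathlib

open scoped InnerProductSpace RightActions ENNReal

noncomputable section

/-- The Hilbert C⋆-module class as it stood in Mathlib of December 2024 (right `Aᵐᵒᵖ`-action,
inner product `A`-linear on the right: `⟪x, y <• a⟫ = ⟪x, y⟫ * a`). -/
class CStarModuleRight (A : outParam <| Type*) (E : Type*) [NonUnitalSemiring A] [StarRing A] [Module ℂ A]
    [AddCommGroup E] [Module ℂ E] [PartialOrder A] [SMul Aᵐᵒᵖ E] [Norm A] [Norm E]
    extends Inner A E where
  inner_add_right {x} {y} {z} : inner x (y + z) = inner x y + inner x z
  inner_self_nonneg {x} : 0 ≤ inner x x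
  inner_self {x} : inner x x = 0 ↔ x = 0
  inner_op_smul_right {a : A} {x y : E} : inner x (y <• a) = inner x y * a
  inner_smul_right_complex {z : ℂ} {x} {y} : inner x (z • y) = z • inner x y
  star_inner x y : star (inner x y) = inner y x
  norm_eq_sqrt_norm_inner_self x : ‖x‖ = √‖inner x x‖

variable {A : Type*} [CommCStarAlgebra A] [PartialOrder A] [StarOrderedRing A]
variable {E : Type*} [NormedAddCommGroup E] [NormedSpace ℂ E] [SMul Aᵐᵒᵖ E]
  [CStarModuleRight A E] [CompleteSpace E]
variable {F : Type*} [NormedAddCommGroup F] [NormedSpace ℂ F] [SMul Aᵐᵒᵖ F]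
  [CStarModuleRight A F] [CompleteSpace F]

/-- `μₙ(x₁,…,xₙ) = sup { ‖Σᵢ ⟪xᵢ, y⟫⟪y, xᵢ⟫‖^(1/2) : y ∈ E, ‖y‖ ≤ 1 }`. -/
def mu {G : Type*} [NormedAddCommGroup G] [NormedSpace ℂ G] [SMul Aᵐᵒᵖ G]
    [CStarModuleRight A G] {n : ℕ} (x : Fin n → G) : ℝ :=
  ⨆ y : {y : G // ‖y‖ ≤ 1}, Real.sqrt ‖∑ i, ⟪x i, (y : G)⟫_A * ⟪(y : G), x i⟫_A‖

/-- `π̃₂(T) = sup { ‖Σᵢ ⟪Txᵢ, Txᵢ⟫‖^(1/2) : n ∈ ℕ, μₙ(x₁,…,xₙ) ≤ 1 }` as an element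
of `[0,∞]`. -/
def piTwo {G H : Type*} [NormedAddCommGroup G] [NormedSpace ℂ G] [SMul Aᵐᵒᵖ G]
    [CStarModuleRight A G] [NormedAddCommGroup H] [NormedSpace ℂ H] [SMul Aᵐᵒᵖ H]
    [CStarModuleRight A H] (T : G → H) : ℝ≥0∞ :=
  ⨆ (n : ℕ) (x : Fin n → G) (_ : mu x ≤ 1),
    ENNReal.ofReal (Real.sqrt ‖∑ i, ⟪T (x i), T (x i)⟫_A‖)

/-! Since `A` is commutative, the Gelfand transform makes `a ≤ b` (for `a, b ≥ 0`) a pointwise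
statement, and testing against positive functions supported where `b` is small shows that it
follows from `‖a p‖ ≤ ‖b p‖` for all `p ≥ 0`. For `a = Σⱼ ⟪xⱼ, y⟫⟪y, xⱼ⟫`, `b = ⟪y, y⟫` and
`p = c⋆c`, these norms are `‖Σⱼ ⟪xⱼ, z⟫⟪z, xⱼ⟫‖` and `‖z‖²` for `z = y <• c⋆`, and the first is at
most `μₙ(x)² ‖z‖²` by rescaling `z` to the unit ball; hence `Σⱼ ⟪xⱼ, y⟫⟪y, xⱼ⟫ ≤ ⟪y, y⟫` when
`μₙ(x) ≤ 1`. Taking `y = T⋆fᵢ`, summing over `i` and expanding each `⟪T xⱼ, T xⱼ⟫` in the frame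
yields `Σⱼ ⟪T xⱼ, T xⱼ⟫ ≤ b`. -/

open scoped ComplexOrder

/-- Test against `p = (t - ‖g‖)⁺` with `t = ‖f x‖ + ‖g x‖`: pointwise `‖g‖ (t - ‖g‖)⁺ ≤ t² / 4`,
while `‖f * p‖ ≥ ‖f x‖ (t - ‖g x‖) = ‖f x‖²`. -/
theorem ContinuousMap.norm_apply_le_of_forall_norm_mul_le {X : Type*} [TopologicalSpace X]
    [CompactSpace X] {f g : C(X, ℂ)} (h : ∀ p, 0 ≤ p → ‖f * p‖ ≤ ‖g * p‖) (x : X) :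
    ‖f x‖ ≤ ‖g x‖ := by
  set t := ‖f x‖ + ‖g x‖
  let p : C(X, ℂ) := ⟨fun y => ((max (t - ‖g y‖) 0 : ℝ) : ℂ), by fun_prop⟩
  have hp : 0 ≤ p := fun y => Complex.zero_le_real.mpr (le_max_right _ _)
  have hnorm (u : C(X, ℂ)) (y : X) : ‖(u * p) y‖ = ‖u y‖ * max (t - ‖g y‖) 0 := by
    simp [p, abs_of_nonneg (le_max_right (t - ‖g y‖) 0)]
  have hgp : ‖g * p‖ ≤ t ^ 2 / 4 := by
    refine (ContinuousMap.norm_le _ (by positivity)).mpr fun y => ?_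
    rw [hnorm, mul_max_of_nonneg _ _ (norm_nonneg _), mul_zero]
    exact max_le (by nlinarith [sq_nonneg (t - 2 * ‖g y‖)]) (by positivity)
  have hfp : ‖f x‖ * max (t - ‖g x‖) 0 ≤ ‖f * p‖ := hnorm f x ▸ (f * p).norm_coe_le_norm x
  have key := hfp.trans ((h p hp).trans hgp)
  rw [show t - ‖g x‖ = ‖f x‖ by ring, max_eq_left (norm_nonneg _)] at key
  nlinarith [norm_nonneg (f x), norm_nonneg (g x)]

theorem ContinuousMap.le_of_forall_norm_mul_le {X : Type*} [TopologicalSpace X] [CompactSpace X]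
    {f g : C(X, ℂ)} (hf : 0 ≤ f) (hg : 0 ≤ g) (h : ∀ p, 0 ≤ p → ‖f * p‖ ≤ ‖g * p‖) :
    f ≤ g := by
  refine ContinuousMap.le_def.mpr fun x => ?_
  rw [Complex.eq_coe_norm_of_nonneg (ContinuousMap.le_def.mp hf x),
    Complex.eq_coe_norm_of_nonneg (ContinuousMap.le_def.mp hg x)]
  exact Complex.real_le_real.mpr (norm_apply_le_of_forall_norm_mul_le h x)

theorem CommCStarAlgebra.le_of_forall_norm_mul_le {a b : A} (ha : 0 ≤ a) (hb : 0 ≤ b)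
    (h : ∀ p, 0 ≤ p → ‖a * p‖ ≤ ‖b * p‖) : a ≤ b := by
  let Γ := gelfandStarTransform A
  have hΓ (c : A) : ‖Γ c‖ = ‖c‖ :=
    (gelfandTransform_isometry A).norm_map_of_map_zero (map_zero _) c
  rw [← map_le_map_iff Γ]
  refine ContinuousMap.le_of_forall_norm_mul_le (map_nonneg Γ ha) (map_nonneg Γ hb) fun p hp => ?_
  obtain ⟨q, rfl⟩ : ∃ q, Γ q = p := Γ.surjective p
  rw [← map_mul, ← map_mul, hΓ, hΓ]
  exact h q (by simpa using map_nonneg Γ.symm hp)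

namespace CStarModuleRight

section Algebraic

variable {B : Type*} [NonUnitalNormedRing B] [StarRing B] [Module ℂ B] [PartialOrder B]
  {M : Type*} [AddCommGroup M] [Module ℂ M] [SMul Bᵐᵒᵖ M] [Norm M] [CStarModuleRight B M]

theorem inner_op_smul_left {a : B} {x y : M} : ⟪x <• a, y⟫_B = star a * ⟪x, y⟫_B := by
  rw [← star_inner y, inner_op_smul_right, star_mul, star_inner]

theorem inner_smul_left_complex [StarModule ℂ B] {z : ℂ} {x y : M} :
    ⟪z • x, y⟫_B = star z • ⟪x, y⟫_B := by
  rw [← star_inner y, inner_smul_right_complex, star_smul, star_inner]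

theorem inner_zero_right {x : M} : ⟪x, (0 : M)⟫_B = 0 := by
  have h := inner_add_right (A := B) (x := x) (y := (0 : M)) (z := 0)
  rwa [add_zero, left_eq_add] at h

theorem inner_zero_left {x : M} : ⟪(0 : M), x⟫_B = 0 := by
  rw [← star_inner x, inner_zero_right, star_zero]

theorem norm_sq_eq {x : M} : ‖x‖ ^ 2 = ‖⟪x, x⟫_B‖ := by
  rw [norm_eq_sqrt_norm_inner_self (A := B), Real.sq_sqrt (norm_nonneg _)]

end Algebraic

/-- Over a commutative `A`, `a • x := x <• a` makes `M` a `CStarModule`, whose Cauchy–Schwarz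
inequality then applies. -/
theorem norm_inner_le {M : Type*} [AddCommGroup M] [Module ℂ M] [SMul Aᵐᵒᵖ M] [Norm M]
    [CStarModuleRight A M] (x y : M) : ‖⟪x, y⟫_A‖ ≤ ‖x‖ * ‖y‖ :=
  letI : SMul A M := ⟨fun a x => x <• a⟩
  letI : CStarModule A M :=
    { inner_add_right := inner_add_right
      inner_self_nonneg := inner_self_nonneg
      inner_self := inner_self
      inner_op_smul_right := inner_op_smul_right.trans (mul_comm _ _)
      inner_smul_right_complex := inner_smul_right_complex
      star_inner := star_inner
      norm_eq_sqrt_norm_inner_self := norm_eq_sqrt_norm_inner_self }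
  CStarModule.norm_inner_le M

variable {M : Type*} [NormedAddCommGroup M] [NormedSpace ℂ M] [SMul Aᵐᵒᵖ M]
  [CStarModuleRight A M] {n : ℕ} (x : Fin n → M)

theorem bddAbove_range_sqrt_norm_sum_inner_mul_inner :
    BddAbove (Set.range fun y : {y : M // ‖y‖ ≤ 1} =>
      √‖∑ j, ⟪x j, (y : M)⟫_A * ⟪(y : M), x j⟫_A‖) := by
  refine ⟨√(∑ j, ‖x j‖ ^ 2), ?_⟩
  rintro - ⟨⟨y, hy⟩, rfl⟩
  refine Real.sqrt_le_sqrt ((norm_sum_le _ _).trans (Finset.sum_le_sum fun j _ => ?_))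
  calc ‖⟪x j, y⟫_A * ⟪y, x j⟫_A‖
      ≤ (‖x j‖ * ‖y‖) * (‖y‖ * ‖x j‖) :=
        (norm_mul_le _ _).trans (mul_le_mul (norm_inner_le _ _)
          (norm_inner_le _ _) (norm_nonneg _) (by positivity))
    _ = ‖x j‖ ^ 2 * ‖y‖ ^ 2 := by ring
    _ ≤ ‖x j‖ ^ 2 := mul_le_of_le_one_right (sq_nonneg _) (pow_le_one₀ (norm_nonneg _) hy)

theorem norm_sum_inner_mul_inner_le_mu_sq_of_norm_le_one {y : M} (hy : ‖y‖ ≤ 1) :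
    ‖∑ j, ⟪x j, y⟫_A * ⟪y, x j⟫_A‖ ≤ mu x ^ 2 :=
  (Real.sqrt_le_iff.mp (le_ciSup (bddAbove_range_sqrt_norm_sum_inner_mul_inner x) ⟨y, hy⟩)).2

theorem norm_sum_inner_mul_inner_le_mu_sq_mul_norm_sq (z : M) :
    ‖∑ j, ⟪x j, z⟫_A * ⟪z, x j⟫_A‖ ≤ mu x ^ 2 * ‖z‖ ^ 2 := by
  rcases eq_or_ne z 0 with rfl | hz
  · simp [inner_zero_left, inner_zero_right]
  have hz' : 0 < ‖z‖ := norm_pos_iff.mpr hz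
  set c : ℂ := ((‖z‖⁻¹ : ℝ) : ℂ)
  have hscale : ∑ j, ⟪x j, c • z⟫_A * ⟪c • z, x j⟫_A
      = (c * c) • ∑ j, ⟪x j, z⟫_A * ⟪z, x j⟫_A := by
    simp only [inner_smul_right_complex, inner_smul_left_complex, Complex.star_def,
      c, Complex.conj_ofReal, smul_mul_smul_comm, Finset.smul_sum]
  have hunit : ‖c • z‖ ≤ 1 := by
    rw [norm_smul, Complex.norm_real, Real.norm_of_nonneg (inv_nonneg.mpr hz'.le),
      inv_mul_cancel₀ hz'.ne']
  have key := norm_sum_inner_mul_inner_le_mu_sq_of_norm_le_one x hunit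
  rw [hscale, norm_smul, norm_mul, Complex.norm_real, Real.norm_of_nonneg (inv_nonneg.mpr hz'.le),
    ← sq, inv_pow, inv_mul_le_iff₀ (by positivity)] at key
  linarith

theorem sum_inner_mul_inner_le_inner_self {x : Fin n → M} (hx : mu x ≤ 1) (y : M) :
    ∑ j, ⟪x j, y⟫_A * ⟪y, x j⟫_A ≤ ⟪y, y⟫_A := by
  refine CommCStarAlgebra.le_of_forall_norm_mul_le
    (Finset.sum_nonneg fun j _ => ?_) inner_self_nonneg fun p hp => ?_
  · rw [← star_inner (x j)]
    exact mul_star_self_nonneg _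
  obtain ⟨c, rfl⟩ := CStarAlgebra.nonneg_iff_eq_star_mul_self.mp hp
  have hsum : (∑ j, ⟪x j, y⟫_A * ⟪y, x j⟫_A) * (star c * c)
      = ∑ j, ⟪x j, y <• star c⟫_A * ⟪y <• star c, x j⟫_A := by
    simp only [Finset.sum_mul, inner_op_smul_right, inner_op_smul_left, star_star]
    exact Finset.sum_congr rfl fun j _ => by ring
  have hself : ‖⟪y, y⟫_A * (star c * c)‖ = ‖y <• star c‖ ^ 2 := by
    rw [norm_sq_eq, inner_op_smul_right, inner_op_smul_left, star_star]
    congr 1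
    ring
  have hmu : mu x ^ 2 ≤ 1 := pow_le_one₀ (Real.iSup_nonneg fun _ => Real.sqrt_nonneg _) hx
  rw [hsum, hself]
  exact (norm_sum_inner_mul_inner_le_mu_sq_mul_norm_sq x _).trans
    (mul_le_of_le_one_left (by positivity) hmu)

end CStarModuleRight

open Finset in
/-- Let `A` be a unital commutative C*-algebra, `(fᵢ)_{i∈ℕ}` a standard normalized tight frame
for `E`, and `T : E → E` adjointable with adjoint `T'` such that `Σᵢ ⟪T'fᵢ, T'fᵢ⟫` converges in
norm to `b ∈ A`. Then `Σⱼ₌₁ⁿ ⟪Txⱼ, Txⱼ⟫ ≤ b` whenever `μₙ(x₁,…,xₙ) ≤ 1`; in particular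
`π̃₂(T) ≤ ‖b‖^(1/2)`. -/
theorem sum_inner_le_of_frame (f : ℕ → E)
    (hf : ∀ x : E, Filter.Tendsto
        (fun m => ∑ i ∈ Finset.range m, ⟪x, f i⟫_A * ⟪f i, x⟫_A)
        Filter.atTop (nhds ⟪x, x⟫_A))
    (T : E →L[ℂ] E) (T' : E →L[ℂ] E)
    (hT : ∀ (x y : E), ⟪T x, y⟫_A = ⟪x, T' y⟫_A)
    (b : A)
    (hb : Filter.Tendsto (fun m => ∑ i ∈ Finset.range m, ⟪T' (f i), T' (f i)⟫_A)
        Filter.atTop (nhds b)) :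
    (∀ (n : ℕ) (x : Fin n → E), mu x ≤ 1 → ∑ j, ⟪T (x j), T (x j)⟫_A ≤ b) ∧
    piTwo (⇑T) ≤ ENNReal.ofReal (Real.sqrt ‖b‖) := by
  have hT' (x y : E) : ⟪y, T x⟫_A = ⟪T' y, x⟫_A := by
    rw [← CStarModuleRight.star_inner (T x), hT, CStarModuleRight.star_inner]
  have hpartial (m : ℕ) : ∑ i ∈ range m, ⟪T' (f i), T' (f i)⟫_A ≤ b :=
    (monotone_nat_of_le_succ fun m => by
      simpa [sum_range_succ] using CStarModuleRight.inner_self_nonneg).ge_of_tendsto hb m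
  have hsum (n : ℕ) (x : Fin n → E) (hx : mu x ≤ 1) : ∑ j, ⟪T (x j), T (x j)⟫_A ≤ b := by
    refine le_of_tendsto' (tendsto_finsetSum _ fun j _ => hf (T (x j))) fun m => ?_
    calc ∑ j, ∑ i ∈ range m, ⟪T (x j), f i⟫_A * ⟪f i, T (x j)⟫_A
        = ∑ i ∈ range m, ∑ j, ⟪x j, T' (f i)⟫_A * ⟪T' (f i), x j⟫_A := by
          rw [sum_comm]; simp only [hT, hT']
      _ ≤ ∑ i ∈ range m, ⟪T' (f i), T' (f i)⟫_A :=
          sum_le_sum fun i _ => CStarModuleRight.sum_inner_mul_inner_le_inner_self hx _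
      _ ≤ b := hpartial m
  refine ⟨hsum, iSup₂_le fun n x => iSup_le fun hx => ?_⟩
  exact ENNReal.ofReal_le_ofReal <| Real.sqrt_le_sqrt <| CStarAlgebra.norm_le_norm_of_nonneg_of_le
    (sum_nonneg fun j _ => CStarModuleRight.inner_self_nonneg) (hsum n x hx)
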